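/- arXiv:2311.15630 — 4 statements merged into one kernel-verified Lean document; each statement's English description precedes it below -/
import Mathlib

section
/- For all real numbers t ∈ [0,1], s ∈ [-1,1], and p ≥ 0, one has 1 + t^{p+2} − (t + t^{p+1})·s ≥ 2^{-p}·(1 + t² − 2ts)^{(p+2)/2}. -/
theorem scalar_key_inequality (p t s : ℝ) (hp : 0 ≤ p)
    (ht : t ∈ Set.Icc (0 : ℝ) 1) (hs : s ∈ Set.Icc (-1 : ℝ) 1) :
    1 + t ^ (p + 2) - (t + t ^ (p + 1)) * s ≥
      2 ^ (-p) * (1 + t ^ 2 - 2 * t * s) ^ ((p + 2) / 2) := by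
  obtain ⟨ht0, ht1⟩ := ht
  obtain ⟨hsm, hs1⟩ := hs
  have h1t : (0:ℝ) ≤ 1 - t := by linarith
  have h1t' : (0:ℝ) ≤ 1 + t := by linarith
  have hp1 : p + 1 ≠ 0 := by intro h; linarith
  have hp2 : p + 2 ≠ 0 := by intro h; linarith
  set q : ℝ := (p + 2) / 2 with hqdef
  have hq : (1:ℝ) ≤ q := by rw [hqdef]; linarith
  set X : ℝ := t ^ (p + 1) with hX
  set Y : ℝ := t ^ (p + 2) with hY
  have hXnn : 0 ≤ X := Real.rpow_nonneg ht0 _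
  have hXsplit : X = t ^ p * t := by
    have h := Real.rpow_add' ht0 hp1
    simpa [Real.rpow_one] using h
  have hYsplit : Y = t ^ p * t ^ 2 := by
    have h := Real.rpow_add' ht0 hp2
    rw [hY, h, Real.rpow_two]
  have htX : t * X = Y := by rw [hXsplit, hYsplit]; ring
  have hXt : X ≤ t := by
    have h2 : t ^ p ≤ 1 := Real.rpow_le_one ht0 ht1 hp
    rw [hXsplit]
    nlinarith [Real.rpow_nonneg ht0 p]
  have h2p : (0:ℝ) < 2 ^ (-p) := Real.rpow_pos_of_pos (by norm_num) _
  have h2pp : (0:ℝ) < 2 ^ p := Real.rpow_pos_of_pos (by norm_num) _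
  -- endpoint s = 1
  have hE1 : (2:ℝ) ^ (-p) * (1 - t) ^ (p + 2) ≤ (1 - t) * (1 - X) := by
    have key : (2:ℝ) ^ (-p) * (1 - t) ^ (p + 2) = (1 - t) ^ 2 * ((1 - t) / 2) ^ p := by
      rw [Real.div_rpow h1t (by norm_num), Real.rpow_add' h1t hp2,
        Real.rpow_two, Real.rpow_neg (by norm_num : (0:ℝ) ≤ 2)]
      field_simp
    have hc : ((1 - t) / 2) ^ p ≤ 1 :=
      Real.rpow_le_one (by linarith) (by linarith) hp
    have hcn : 0 ≤ ((1 - t) / 2) ^ p := Real.rpow_nonneg (by linarith) p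
    rw [key]
    nlinarith [sq_nonneg (1 - t)]
  -- endpoint s = -1
  have hE2 : (2:ℝ) ^ (-p) * (1 + t) ^ (p + 2) ≤ (1 + t) * (1 + X) := by
    have hcv := (convexOn_rpow (by linarith : (1:ℝ) ≤ p + 1)).2
      (Set.mem_Ici.mpr ht0) (Set.mem_Ici.mpr (by norm_num : (0:ℝ) ≤ 1))
      (by norm_num : (0:ℝ) ≤ 1/2) (by norm_num : (0:ℝ) ≤ 1/2) (by norm_num)
    simp only [smul_eq_mul, Real.one_rpow] at hcv
    have h12 : (1/2 : ℝ) * t + 1/2 * 1 = (1 + t) / 2 := by ring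
    rw [h12] at hcv
    have e1 : (2:ℝ) ^ (p + 1) = 2 ^ p * 2 := by
      rw [Real.rpow_add (by norm_num : (0:ℝ) < 2), Real.rpow_one]
    have e2 : (1 + t) ^ (p + 2) = (1 + t) ^ (p + 1) * (1 + t) := by
      have h := Real.rpow_add' h1t' (show (p + 1) + 1 ≠ 0 by intro h; linarith)
      rw [show (p + 1) + (1:ℝ) = p + 2 by ring] at h
      rw [h, Real.rpow_one]
    have hkey : (2:ℝ) ^ (-p) * (1 + t) ^ (p + 2) =
        (1 + t) * 2 * (((1 + t) / 2) ^ (p + 1)) := by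
      rw [Real.div_rpow h1t' (by norm_num), e2, e1,
        Real.rpow_neg (by norm_num : (0:ℝ) ≤ 2)]
      field_simp
    rw [hkey, ← hX] at *
    nlinarith
  -- convexity in s
  set l : ℝ := (1 + s) / 2 with hl
  have hl0 : 0 ≤ l := by rw [hl]; linarith
  have hl1 : 0 ≤ 1 - l := by rw [hl]; linarith
  have hcv := (convexOn_rpow hq).2
    (Set.mem_Ici.mpr (sq_nonneg (1 - t))) (Set.mem_Ici.mpr (sq_nonneg (1 + t)))
    hl0 hl1 (by ring)
  simp only [smul_eq_mul] at hcv
  have hu : (((1 - t) ^ 2 : ℝ)) ^ q = (1 - t) ^ (p + 2) := by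
    rw [← Real.rpow_natCast (1 - t) 2, ← Real.rpow_mul h1t,
      show ((2:ℕ):ℝ) * q = p + 2 by rw [hqdef]; push_cast; ring]
  have hv : (((1 + t) ^ 2 : ℝ)) ^ q = (1 + t) ^ (p + 2) := by
    rw [← Real.rpow_natCast (1 + t) 2, ← Real.rpow_mul h1t',
      show ((2:ℕ):ℝ) * q = p + 2 by rw [hqdef]; push_cast; ring]
  rw [hu, hv] at hcv
  have hD : l * (1 - t) ^ 2 + (1 - l) * (1 + t) ^ 2 = 1 + t ^ 2 - 2 * t * s := by
    rw [hl]; ring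
  rw [hD] at hcv
  have hL : 1 + Y - (t + X) * s = l * ((1 - t) * (1 - X)) + (1 - l) * ((1 + t) * (1 + X)) := by
    rw [← htX, hl]; ring
  rw [ge_iff_le, hL]
  calc (2:ℝ) ^ (-p) * (1 + t ^ 2 - 2 * t * s) ^ q
      ≤ 2 ^ (-p) * (l * (1 - t) ^ (p + 2) + (1 - l) * (1 + t) ^ (p + 2)) :=
        mul_le_mul_of_nonneg_left hcv (le_of_lt h2p)
    _ = l * (2 ^ (-p) * (1 - t) ^ (p + 2)) + (1 - l) * (2 ^ (-p) * (1 + t) ^ (p + 2)) := by ring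
    _ ≤ l * ((1 - t) * (1 - X)) + (1 - l) * ((1 + t) * (1 + X)) := by
        have h1 := mul_le_mul_of_nonneg_left hE1 hl0
        have h2 := mul_le_mul_of_nonneg_left hE2 hl1
        linarith
end

section
/- For p ≥ 0 and all t ∈ [0,1], the function g(t) = (t^{p+2} + t^{p+1} + t + 1)/(1+t)^{p+2} is decreasing on [0,1], and hence g(t) ≥ g(1) = 2^{-p} for all t ∈ [0,1]. -/
open Real Set

/-! With `u = t / (1 + t)`, which increases from `0` to `1 / 2` on `[0, 1]`, the numerator factors
as `(t ^ (p + 1) + 1) (1 + t)` and `g t = u ^ (p + 1) + (1 - u) ^ (p + 1)`. For any convex `f` on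
`[0, 1]` the symmetrisation `f u + f (1 - u)` decreases on `[0, 1 / 2]`, and `x ↦ x ^ (p + 1)` is
convex since `p + 1 ≥ 1`. -/

theorem ConvexOn.antitoneOn_add_comp_one_sub {f : ℝ → ℝ} (hf : ConvexOn ℝ (Icc 0 1) f) :
    AntitoneOn (fun u => f u + f (1 - u)) (Icc 0 (1 / 2)) := by
  intro s ⟨hs0, hs⟩ t ⟨_, ht⟩ hst
  obtain rfl | hs_lt := hs.eq_or_lt
  · obtain rfl : t = 1 / 2 := by linarith
    rfl
  -- `t` and `1 - t` are the convex combinations `a s + b (1 - s)` and `b s + a (1 - s)`.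
  have hd : 0 < 1 - 2 * s := by linarith
  have hd₀ := hd.ne'
  set a := (1 - s - t) / (1 - 2 * s) with ha_def
  set b := (t - s) / (1 - 2 * s) with hb_def
  have ha : 0 ≤ a := div_nonneg (by linarith) hd.le
  have hb : 0 ≤ b := div_nonneg (by linarith) hd.le
  have hab : a + b = 1 := by rw [ha_def, hb_def, ← add_div, div_eq_one_iff_eq hd₀]; ring
  have hs_mem : s ∈ Icc (0 : ℝ) 1 := ⟨hs0, by linarith⟩
  have h1s_mem : 1 - s ∈ Icc (0 : ℝ) 1 := ⟨by linarith, by linarith⟩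
  have h₁ : a • s + b • (1 - s) = t := by
    rw [smul_eq_mul, smul_eq_mul, ha_def, hb_def, div_mul_eq_mul_div, div_mul_eq_mul_div,
      ← add_div, div_eq_iff hd₀]
    ring
  have h₂ : b • s + a • (1 - s) = 1 - t := by
    rw [smul_eq_mul, smul_eq_mul, ha_def, hb_def, div_mul_eq_mul_div, div_mul_eq_mul_div,
      ← add_div, div_eq_iff hd₀]
    ring
  have e₁ := hf.2 hs_mem h1s_mem ha hb hab
  have e₂ := hf.2 hs_mem h1s_mem hb ha (by rw [add_comm, hab])
  rw [h₁] at e₁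
  rw [h₂] at e₂
  simp only [smul_eq_mul] at e₁ e₂
  calc f t + f (1 - t) ≤ (a + b) * (f s + f (1 - s)) := by linarith
    _ = f s + f (1 - s) := by rw [hab, one_mul]

theorem antitoneOn_rpow_add_one_sub_rpow {q : ℝ} (hq : 1 ≤ q) :
    AntitoneOn (fun u : ℝ => u ^ q + (1 - u) ^ q) (Icc 0 (1 / 2)) :=
  ((convexOn_rpow hq).subset Icc_subset_Ici_self (convex_Icc 0 1)).antitoneOn_add_comp_one_sub

theorem monotoneOn_div_one_add : MonotoneOn (fun t : ℝ => t / (1 + t)) (Ici 0) := by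
  intro s hs t ht hst
  simp only [mem_Ici] at hs ht
  rw [div_le_div_iff₀ (by linarith) (by linarith)]
  nlinarith

theorem mapsTo_div_one_add : MapsTo (fun t : ℝ => t / (1 + t)) (Icc 0 1) (Icc 0 (1 / 2)) := by
  intro t ⟨ht0, ht1⟩
  refine ⟨by positivity, ?_⟩
  rw [div_le_div_iff₀ (by linarith) (by norm_num)]
  linarith

theorem rpow_add_one_add_rpow_add_add_one_div_eq {q t : ℝ} (ht : 0 ≤ t) (hq : q + 1 ≠ 0) :
    (t ^ (q + 1) + t ^ q + t + 1) / (1 + t) ^ (q + 1) =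
      (t / (1 + t)) ^ q + (1 - t / (1 + t)) ^ q := by
  have h1t : 0 < 1 + t := by linarith
  have hfactor : t ^ (q + 1) + t ^ q + t + 1 = (t ^ q + 1) * (1 + t) := by
    rw [rpow_add' ht hq, rpow_one]; ring
  have hcompl : 1 - t / (1 + t) = 1 / (1 + t) := by field_simp; ring
  have : (1 + t) ^ q ≠ 0 := (rpow_pos_of_pos h1t q).ne'
  rw [hfactor, hcompl, rpow_add_one h1t.ne', div_rpow ht h1t.le, div_rpow zero_le_one h1t.le,
    one_rpow]
  field_simp

theorem g_antitone_and_ge (p : ℝ) (hp : 0 ≤ p)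
    (g : ℝ → ℝ) (hg : ∀ t, g t = (t ^ (p + 2) + t ^ (p + 1) + t + 1) / (1 + t) ^ (p + 2)) :
    AntitoneOn g (Set.Icc 0 1) ∧ g 1 = 2 ^ (-p) ∧
      ∀ t ∈ Set.Icc (0 : ℝ) 1, g t ≥ 2 ^ (-p) := by
  have hg_subst :
      ∀ t ∈ Icc (0 : ℝ) 1, g t = (t / (1 + t)) ^ (p + 1) + (1 - t / (1 + t)) ^ (p + 1) := by
    intro t ht
    rw [hg, show p + 2 = p + 1 + 1 by ring,
      rpow_add_one_add_rpow_add_add_one_div_eq ht.1 (by linarith)]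
  have hanti : AntitoneOn g (Icc 0 1) :=
    ((antitoneOn_rpow_add_one_sub_rpow (by linarith)).comp_MonotoneOn
      (monotoneOn_div_one_add.mono Icc_subset_Ici_self) mapsTo_div_one_add).congr
      fun t ht => (hg_subst t ht).symm
  have hg1 : g 1 = 2 ^ (-p) := by
    rw [hg, one_rpow, one_rpow, one_add_one_eq_two, rpow_add two_pos, rpow_neg zero_le_two]
    norm_num
    field_simp
  refine ⟨hanti, hg1, fun t ht => ?_⟩
  rw [← hg1]
  exact hanti ht (right_mem_Icc.2 zero_le_one) ht.2
end

section
/- Let S be an evolution process on a metric space X. Suppose there exists τ > 0 such that S(t, t−τ) is a compact map for each t, and there exists a backwards bounded pullback absorbing family B̂ = {B_t}. Then the family Ĉ defined by C_t = ⋃_{s ≤ s₀(t)} S(t,s) B_s (for suitable s₀(t)) is positively invariant, backwards bounded, and pullback absorbing, and the family M̂ with M_t = closure of S(t, t−τ) C_{t−τ} is compact, positively invariant, and pullback absorbing; hence for every decay function φ, M̂ is a generalized φ-pullback attractor for S. -/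
open Filter Set

variable {X : Type*} [MetricSpace X]

/-- An evolution process on a metric space `X`, with continuous time. -/
def IsEvolutionProcess (S : ℝ → ℝ → X → X) : Prop :=
  (∀ t x, S t t x = x) ∧
  (∀ t r s, s ≤ r → r ≤ t → ∀ x, S t r (S r s x) = S t s x) ∧
  ContinuousOn (fun p : (ℝ × ℝ) × X => S p.1.1 p.1.2 p.2)
    {p : (ℝ × ℝ) × X | p.1.2 ≤ p.1.1}

/-- A family is positively invariant for `S`. -/
def PositivelyInvariant (S : ℝ → ℝ → X → X) (B : ℝ → Set X) : Prop :=
  ∀ t s, s ≤ t → S t s '' B s ⊆ B t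

/-- A family is backwards bounded. -/
def BackwardsBounded (B : ℝ → Set X) : Prop :=
  ∀ t : ℝ, Bornology.IsBounded (⋃ s ∈ Iic t, B s)

/-- A family is pullback absorbing for `S`. -/
def PullbackAbsorbing (S : ℝ → ℝ → X → X) (B : ℝ → Set X) : Prop :=
  ∀ D : Set X, Bornology.IsBounded D → ∀ t : ℝ,
    ∃ s₀ ≤ t, ∀ s ≤ s₀, S t s '' D ⊆ B t

/-- A decay function `φ : [k,∞) → [0,∞)`. -/
def IsDecayFunction (φ : ℝ → ℝ) (k : ℝ) : Prop :=
  0 ≤ k ∧ (∀ t ∈ Ici k, 0 ≤ φ t) ∧ AntitoneOn φ (Ici k) ∧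
    Tendsto φ atTop (nhds 0) ∧
    ∀ ω > (0 : ℝ), ∀ η : ℝ, ∃ c : ℝ, ∀ᶠ t in atTop, φ (ω * t + η) / φ (ω * t) ≤ c

/-- `M` is a generalized `φ`-pullback attractor for `S`: compact, positively invariant and
`φ`-pullback attracting (attraction phrased via `Metric.infDist`, i.e. the Hausdorff
semidistance `d_H(S(t,t-τ)D, M_t) ≤ C φ(ωτ)`). -/
def GeneralizedPullbackAttractor (S : ℝ → ℝ → X → X) (φ : ℝ → ℝ) (M : ℝ → Set X) : Prop :=
  (∀ t, IsCompact (M t)) ∧ PositivelyInvariant S M ∧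
    ∃ ω > (0 : ℝ), ∀ D : Set X, Bornology.IsBounded D → ∀ t : ℝ,
      ∃ C ≥ (0 : ℝ), ∃ τ₀ ≥ (0 : ℝ), ∀ τ ≥ τ₀, ∀ x ∈ D,
        Metric.infDist (S t (t - τ) x) (M t) ≤ C * φ (ω * τ)

/-! Write `pullbackImage S B t σ = ⋃_{s ≤ σ} S(t,s) B_s`, so `C_t = pullbackImage S B t (s₀ t)`.
Once `σ` is deep enough for `⋃_{s ≤ p-τ} B_s` to be absorbed into `B_{p-τ}`, the set
`pullbackImage S B p σ` is the image of a bounded set under the compact map `S(p, p-τ)`, and by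
joint continuity its images under `S(u, p)`, `u ∈ [p, b]`, lie in one compact set. Backwards
boundedness of `C` needs a bound uniform over the infinitely many windows `[-k, -k+1]`: a
Cantor-intersection argument on `[p, b] × closure (pullbackImage S B p σ)` shows that for `σ` deep
enough all these images lie in a fixed neighbourhood of `⋃_{s ≤ 1} B_s`, since each of them is
eventually absorbed into `B_u`. The depths chosen window by window are then made monotone in `t`. -/

section

variable {S : ℝ → ℝ → X → X} {B : ℝ → Set X}

theorem IsEvolutionProcess.apply_apply (hS : IsEvolutionProcess S) {s r t : ℝ} (hsr : s ≤ r)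
    (hrt : r ≤ t) (x : X) : S t r (S r s x) = S t s x :=
  hS.2.1 t r s hsr hrt x

theorem IsEvolutionProcess.image_image (hS : IsEvolutionProcess S) {s r t : ℝ} (hsr : s ≤ r)
    (hrt : r ≤ t) (A : Set X) : S t r '' (S r s '' A) = S t s '' A := by
  rw [Set.image_image]
  exact image_congr fun x _ => hS.apply_apply hsr hrt x

theorem IsEvolutionProcess.continuous (hS : IsEvolutionProcess S) {s t : ℝ} (hst : s ≤ t) :
    Continuous (S t s) :=
  hS.2.2.comp_continuous (continuous_const (y := (t, s)).prodMk continuous_id) fun _ => hst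

theorem IsEvolutionProcess.continuousOn_Icc_prod (hS : IsEvolutionProcess S) (p b : ℝ)
    (K : Set X) : ContinuousOn (fun q : ℝ × X => S q.1 p q.2) (Icc p b ×ˢ K) :=
  hS.2.2.comp (by fun_prop : Continuous fun q : ℝ × X => ((q.1, p), q.2)).continuousOn
    fun _ hq => hq.1.1

theorem BackwardsBounded.isBounded (hB : BackwardsBounded B) (t : ℝ) :
    Bornology.IsBounded (B t) :=
  (hB t).subset (subset_biUnion_of_mem (mem_Iic.2 le_rfl))

def pullbackImage (S : ℝ → ℝ → X → X) (B : ℝ → Set X) (t σ : ℝ) : Set X :=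
  ⋃ s ∈ Iic σ, S t s '' B s

omit [MetricSpace X] in
theorem pullbackImage_mono (t : ℝ) : Monotone (pullbackImage S B t) :=
  fun _ _ h => biUnion_subset_biUnion_left (Iic_subset_Iic.2 h)

theorem IsEvolutionProcess.image_pullbackImage (hS : IsEvolutionProcess S) {σ r t : ℝ}
    (hσr : σ ≤ r) (hrt : r ≤ t) : S t r '' pullbackImage S B r σ = pullbackImage S B t σ := by
  simp only [pullbackImage, image_iUnion₂]
  exact iUnion₂_congr fun s hs => hS.image_image (le_trans hs hσr) hrt (B s)

theorem IsEvolutionProcess.pullbackImage_subset_image_prod (hS : IsEvolutionProcess S)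
    {p b u σ : ℝ} (hσ : σ ≤ p) (hu : u ∈ Icc p b) :
    pullbackImage S B u σ ⊆
      (fun q : ℝ × X => S q.1 p q.2) '' (Icc p b ×ˢ pullbackImage S B p σ) := by
  rw [← hS.image_pullbackImage hσ hu.1]
  rintro _ ⟨x, hx, rfl⟩
  exact ⟨(u, x), ⟨hu, hx⟩, rfl⟩

theorem eventually_pullbackImage_subset (hBbb : BackwardsBounded B)
    (hBabs : PullbackAbsorbing S B) (t : ℝ) :
    ∀ᶠ σ in atBot, pullbackImage S B t σ ⊆ B t := by
  obtain ⟨θ, hθt, hθ⟩ := hBabs _ (hBbb t) t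
  filter_upwards [eventually_le_atBot θ] with σ hσ
  refine iUnion₂_subset fun s hs => ?_
  have hsθ : s ≤ θ := le_trans hs hσ
  exact (image_mono (subset_biUnion_of_mem (mem_Iic.2 (hsθ.trans hθt)))).trans (hθ s hsθ)

theorem IsEvolutionProcess.eventually_isCompact_closure_pullbackImage
    (hS : IsEvolutionProcess S) {τ : ℝ} (hτ : 0 ≤ τ)
    (hcpt : ∀ t : ℝ, ∀ D : Set X, Bornology.IsBounded D → IsCompact (closure (S t (t - τ) '' D)))
    (hBbb : BackwardsBounded B) (hBabs : PullbackAbsorbing S B) (p : ℝ) :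
    ∀ᶠ σ in atBot, IsCompact (closure (pullbackImage S B p σ)) := by
  filter_upwards [eventually_le_atBot (p - τ), eventually_pullbackImage_subset hBbb hBabs (p - τ)]
    with σ hσ hsub
  rw [← hS.image_pullbackImage hσ (by linarith)]
  exact hcpt p _ ((hBbb.isBounded (p - τ)).subset hsub)

theorem IsEvolutionProcess.eventually_isBounded_biUnion_Icc_pullbackImage
    (hS : IsEvolutionProcess S) {p : ℝ}
    (hK : ∀ᶠ σ in atBot, IsCompact (closure (pullbackImage S B p σ))) :
    ∀ᶠ σ in atBot, ∀ b, Bornology.IsBounded (⋃ u ∈ Icc p b, pullbackImage S B u σ) := by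
  filter_upwards [hK, eventually_le_atBot p] with σ hσK hσp b
  have hcompact := (isCompact_Icc.prod hσK).image_of_continuousOn (hS.continuousOn_Icc_prod p b _)
  exact hcompact.isBounded.subset <| iUnion₂_subset fun u hu =>
    (hS.pullbackImage_subset_image_prod hσp hu).trans (image_mono (prod_mono_right subset_closure))

theorem IsEvolutionProcess.eventually_forall_Icc_pullbackImage_subset
    (hS : IsEvolutionProcess S) (hBbb : BackwardsBounded B) (hBabs : PullbackAbsorbing S B)
    {p b : ℝ} (hK : ∀ᶠ σ in atBot, IsCompact (closure (pullbackImage S B p σ)))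
    {E : Set X} (hE : IsOpen E) (hBE : ∀ u ∈ Icc p b, closure (B u) ⊆ E) :
    ∀ᶠ σ in atBot, ∀ u ∈ Icc p b, pullbackImage S B u σ ⊆ E := by
  obtain ⟨σ₁, hK₁, hσ₁p⟩ := (hK.and (eventually_le_atBot p)).exists
  let F : ℝ → Set (ℝ × X) := fun σ =>
    (Icc p b ×ˢ closure (pullbackImage S B p σ)) ∩ (fun q => S q.1 p q.2) ⁻¹' Eᶜ
  have hF_closed : ∀ σ, IsClosed (F σ) := fun σ =>
    (hS.continuousOn_Icc_prod p b _).preimage_isClosed_of_isClosed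
      (isClosed_Icc.prod isClosed_closure) hE.isClosed_compl
  have hF_mono : Monotone F := fun σ σ' h =>
    inter_subset_inter_left _ (prod_mono_right (closure_mono (pullbackImage_mono p h)))
  -- a point `(u, x)` of every `F σ` would send `x` into `closure (B u) ⊆ E`
  have hF_iInter : (Icc p b ×ˢ closure (pullbackImage S B p σ₁)) ∩ ⋂ σ, F σ = ∅ := by
    refine eq_empty_of_forall_notMem fun ⟨u, x⟩ hq => ?_
    obtain ⟨θ, hθ⟩ := (eventually_pullbackImage_subset hBbb hBabs u).exists_forall_of_atBot
    obtain ⟨⟨hu, hx⟩, hxE⟩ := mem_iInter.1 hq.2 (min θ p)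
    have hSx := image_closure_subset_closure_image (hS.continuous hu.1) ⟨x, hx, rfl⟩
    rw [hS.image_pullbackImage (min_le_right _ _) hu.1] at hSx
    exact hxE (hBE u hu (closure_mono (hθ _ (min_le_left _ _)) hSx))
  obtain ⟨σ₂, hσ₂⟩ := (isCompact_Icc.prod hK₁).elim_directed_family_closed F
    hF_closed hF_iInter hF_mono.directed_ge
  filter_upwards [eventually_le_atBot (min σ₁ σ₂)] with σ hσ u hu x hx
  have hσσ₁ : σ ≤ σ₁ := hσ.trans (min_le_left _ _)
  obtain ⟨⟨u', y⟩, ⟨hu', hy⟩, rfl⟩ :=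
    hS.pullbackImage_subset_image_prod (hσσ₁.trans hσ₁p) hu hx
  by_contra hyE
  have hy₁ := subset_closure (pullbackImage_mono p hσσ₁ hy)
  have hy₂ := subset_closure (pullbackImage_mono p (hσ.trans (min_le_right _ _)) hy)
  exact (eq_empty_iff_forall_notMem.1 hσ₂) (u', y) ⟨⟨hu', hy₁⟩, ⟨hu', hy₂⟩, hyE⟩

theorem exists_monotone_forall_of_eventually_atBot {P : ℕ → ℝ → Prop}
    (h : ∀ k, ∀ᶠ σ in atBot, P k σ) : ∃ s₀ : ℝ → ℝ, Monotone s₀ ∧ ∀ u, P ⌈-u⌉₊ (s₀ u) := by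
  choose σ₀ hσ₀ using fun k => (h k).exists_forall_of_atBot
  let a : ℕ → ℝ := fun k => (Finset.range (k + 1)).inf' Finset.nonempty_range_add_one σ₀
  have ha : Antitone a := fun i j hij =>
    Finset.inf'_mono σ₀ (Finset.range_subset_range.2 (by omega)) Finset.nonempty_range_add_one
  exact ⟨fun u => a ⌈-u⌉₊, fun u v huv => ha (Nat.ceil_mono (neg_le_neg huv)),
    fun u => hσ₀ _ _ (Finset.inf'_le σ₀ (Finset.self_mem_range_succ _))⟩

theorem IsEvolutionProcess.exists_monotone_backwardsBounded_pullbackImage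
    (hS : IsEvolutionProcess S) {τ : ℝ} (hτ : 0 ≤ τ)
    (hcpt : ∀ t : ℝ, ∀ D : Set X, Bornology.IsBounded D → IsCompact (closure (S t (t - τ) '' D)))
    (hBbb : BackwardsBounded B) (hBabs : PullbackAbsorbing S B) :
    ∃ s₀ : ℝ → ℝ, Monotone s₀ ∧ (∀ t, s₀ t ≤ t) ∧
      BackwardsBounded fun t => pullbackImage S B t (s₀ t) := by
  set E := Metric.thickening 1 (⋃ s ∈ Iic (1 : ℝ), B s)
  have hBE : ∀ u ≤ (1 : ℝ), closure (B u) ⊆ E := fun u hu =>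
    (closure_mono (subset_biUnion_of_mem (mem_Iic.2 hu))).trans
      (Metric.closure_subset_thickening one_pos _)
  have hK := hS.eventually_isCompact_closure_pullbackImage hτ hcpt hBbb hBabs
  -- `P k σ`: `σ` is a usable depth at the times `u` with `⌈-u⌉₊ = k`, that is `u ∈ [-k, -k + 1)`
  -- for `k ≥ 1` and `u ≥ 0` for `k = 0`
  obtain ⟨s₀, hmono, hs₀⟩ := exists_monotone_forall_of_eventually_atBot
    (P := fun k σ => σ ≤ -k ∧ (∀ u ∈ Icc (-(k : ℝ)) (-k + 1), pullbackImage S B u σ ⊆ E) ∧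
      ∀ b, Bornology.IsBounded (⋃ u ∈ Icc 0 b, pullbackImage S B u σ))
    fun k => (eventually_le_atBot _).and <|
      (hS.eventually_forall_Icc_pullbackImage_subset hBbb hBabs (hK _) Metric.isOpen_thickening
        fun u hu => hBE u (by linarith [hu.2, k.cast_nonneg (α := ℝ)])).and
      (hS.eventually_isBounded_biUnion_Icc_pullbackImage (hK 0))
  have hle : ∀ t, s₀ t ≤ t := fun t => (hs₀ t).1.trans (by linarith [Nat.le_ceil (-t)])
  refine ⟨s₀, hmono, hle, fun t => ?_⟩
  show Bornology.IsBounded (⋃ u ∈ Iic t, pullbackImage S B u (s₀ u))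
  refine (((hBbb 1).thickening (δ := 1)).union ((hs₀ t).2.2 t)).subset
    (iUnion₂_subset fun u hut => ?_)
  rcases lt_or_ge u 0 with hu | hu
  · have hk : u ∈ Icc (-(⌈-u⌉₊ : ℝ)) (-⌈-u⌉₊ + 1) :=
      ⟨by linarith [Nat.le_ceil (-u)], by linarith [Nat.ceil_lt_add_one (neg_nonneg.2 hu.le)]⟩
    exact ((hs₀ u).2.1 u hk).trans subset_union_left
  · exact ((pullbackImage_mono u (hmono hut)).trans
      (subset_biUnion_of_mem (u := fun u => pullbackImage S B u (s₀ t))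
        (show u ∈ Icc 0 t from ⟨hu, hut⟩))).trans subset_union_right

theorem IsEvolutionProcess.positivelyInvariant_pullbackImage (hS : IsEvolutionProcess S)
    {s₀ : ℝ → ℝ} (hmono : Monotone s₀) (hle : ∀ t, s₀ t ≤ t) :
    PositivelyInvariant S fun t => pullbackImage S B t (s₀ t) := fun t s hst =>
  (hS.image_pullbackImage (hle s) hst).subset.trans (pullbackImage_mono t (hmono hst))

theorem IsEvolutionProcess.pullbackAbsorbing_pullbackImage (hS : IsEvolutionProcess S)
    (hB : PullbackAbsorbing S B) {s₀ : ℝ → ℝ} (hle : ∀ t, s₀ t ≤ t) :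
    PullbackAbsorbing S fun t => pullbackImage S B t (s₀ t) := by
  intro D hD t
  obtain ⟨σ, hσ, habs⟩ := hB D hD (s₀ t)
  refine ⟨σ, hσ.trans (hle t), fun s hs => ?_⟩
  rw [← hS.image_image (hs.trans hσ) (hle t)]
  exact (image_mono (habs s hs)).trans
    (subset_biUnion_of_mem (u := fun r => S t r '' B r) (mem_Iic.2 le_rfl))

theorem IsEvolutionProcess.positivelyInvariant_closure_image (hS : IsEvolutionProcess S)
    {τ : ℝ} (hτ : 0 ≤ τ) {C : ℝ → Set X} (hC : PositivelyInvariant S C) :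
    PositivelyInvariant S fun t => closure (S t (t - τ) '' C (t - τ)) := by
  intro t s hst
  refine (image_closure_subset_closure_image (hS.continuous hst)).trans (closure_mono ?_)
  rw [hS.image_image (by linarith) hst,
    ← hS.image_image (by linarith : s - τ ≤ t - τ) (by linarith : t - τ ≤ t)]
  exact image_mono (hC _ _ (by linarith))

theorem IsEvolutionProcess.pullbackAbsorbing_closure_image (hS : IsEvolutionProcess S)
    {τ : ℝ} (hτ : 0 ≤ τ) {C : ℝ → Set X} (hC : PullbackAbsorbing S C) :
    PullbackAbsorbing S fun t => closure (S t (t - τ) '' C (t - τ)) := by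
  intro D hD t
  obtain ⟨σ, hσ, habs⟩ := hC D hD (t - τ)
  refine ⟨σ, by linarith, fun s hs => ?_⟩
  rw [← hS.image_image (hs.trans hσ) (by linarith : t - τ ≤ t)]
  exact (image_mono (habs s hs)).trans subset_closure

-- absorption makes the distance vanish for large `τ`, so any rate `φ ≥ 0` will do
theorem PullbackAbsorbing.generalizedPullbackAttractor {M : ℝ → Set X}
    (hM : PullbackAbsorbing S M) (hMc : ∀ t, IsCompact (M t)) (hMinv : PositivelyInvariant S M)
    {φ : ℝ → ℝ} {k : ℝ} (hφ : IsDecayFunction φ k) : GeneralizedPullbackAttractor S φ M := by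
  refine ⟨hMc, hMinv, 1, one_pos, fun D hD t => ?_⟩
  obtain ⟨s₁, -, habs⟩ := hM D hD t
  refine ⟨1, zero_le_one, max (t - s₁) k, hφ.1.trans (le_max_right _ _), fun τ hτ x hx => ?_⟩
  rw [Metric.infDist_zero_of_mem (habs _ (by linarith [le_max_left (t - s₁) k]) ⟨x, hx, rfl⟩),
    one_mul, one_mul]
  exact hφ.2.1 τ ((le_max_right _ _).trans hτ)

end

theorem eventually_compact_process_has_generalized_attractor
    (S : ℝ → ℝ → X → X) (hS : IsEvolutionProcess S)
    (τ : ℝ) (hτ : 0 < τ)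
    (hcpt : ∀ t : ℝ, ∀ D : Set X, Bornology.IsBounded D →
      IsCompact (closure (S t (t - τ) '' D)))
    (B : ℝ → Set X) (hBbb : BackwardsBounded B) (hBabs : PullbackAbsorbing S B) :
    ∃ s₀ : ℝ → ℝ, (∀ t, s₀ t ≤ t) ∧
      ∃ C : ℝ → Set X,
        (C = fun t => ⋃ s ∈ Iic (s₀ t), S t s '' B s) ∧
        PositivelyInvariant S C ∧ BackwardsBounded C ∧ PullbackAbsorbing S C ∧
        ∃ M : ℝ → Set X,
          (M = fun t => closure (S t (t - τ) '' C (t - τ))) ∧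
          (∀ t, IsCompact (M t)) ∧ PositivelyInvariant S M ∧ PullbackAbsorbing S M ∧
          ∀ (φ : ℝ → ℝ) (k : ℝ), IsDecayFunction φ k →
            GeneralizedPullbackAttractor S φ M := by
  obtain ⟨s₀, hmono, hle, hCbb⟩ :=
    hS.exists_monotone_backwardsBounded_pullbackImage hτ.le hcpt hBbb hBabs
  have hCinv := hS.positivelyInvariant_pullbackImage (B := B) hmono hle
  have hCabs := hS.pullbackAbsorbing_pullbackImage hBabs hle
  have hMc : ∀ t, IsCompact (closure (S t (t - τ) '' pullbackImage S B (t - τ) (s₀ (t - τ)))) :=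
    fun t => hcpt t _ (hCbb.isBounded (t - τ))
  have hMinv := hS.positivelyInvariant_closure_image hτ.le hCinv
  have hMabs := hS.pullbackAbsorbing_closure_image hτ.le hCabs
  exact ⟨s₀, hle, _, rfl, hCinv, hCbb, hCabs, _, rfl, hMc, hMinv, hMabs,
    fun φ k hφ => hMabs.generalizedPullbackAttractor hMc hMinv hφ⟩
end

section
/- Let S be an evolution process on a complete metric space X, φ a decay function, and B̂ a uniformly pullback absorbing family. Suppose there exists ω > 0 such that for each t there exist C ≥ 0 and τ₀ > 0 with κ(S(t,t−τ)B_{t−τ}) ≤ C·φ(ωτ) for all τ ≥ τ₀, where κ is the Kuratowski measure of noncompactness. Then S is φ-pullback κ-dissipative with rate ω/2: for every bounded D ⊂ X and t there exist C' ≥ 0 and τ₁ ≥ 0 such that κ(⋃_{s ≥ τ} S(t,t−s)D) ≤ C'·φ((ω/2)τ) for all τ ≥ τ₁. -/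
open Filter Set
open scoped ENNReal

variable {X : Type*} [MetricSpace X]

/-- The Kuratowski measure of noncompactness (with values in `ℝ≥0∞`):
the infimum of the `δ` such that `A` admits a finite cover by sets of diameter `≤ δ`. -/
noncomputable def kuratowski (A : Set X) : ℝ≥0∞ :=
  sInf {δ : ℝ≥0∞ | ∃ 𝒰 : Set (Set X), 𝒰.Finite ∧ A ⊆ ⋃₀ 𝒰 ∧
    ∀ U ∈ 𝒰, EMetric.diam U ≤ δ}

/-- A family is uniformly pullback absorbing for `S`. -/
def UniformlyPullbackAbsorbing (S : ℝ → ℝ → X → X) (B : ℝ → Set X) : Prop :=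
  ∀ D : Set X, Bornology.IsBounded D → ∀ t : ℝ,
    ∃ T > (0 : ℝ), ∀ s ≤ t, ∀ r ≥ T, S s (s - r) '' D ⊆ B s

theorem phi_pullback_kappa_dissipative_of_absorbing [CompleteSpace X]
    (S : ℝ → ℝ → X → X) (hS : IsEvolutionProcess S)
    (φ : ℝ → ℝ) (k : ℝ) (hφ : IsDecayFunction φ k)
    (B : ℝ → Set X) (hB : UniformlyPullbackAbsorbing S B)
    (ω : ℝ) (hω : 0 < ω)
    (hκ : ∀ t : ℝ, ∃ C ≥ (0 : ℝ), ∃ τ₀ > (0 : ℝ), ∀ τ ≥ τ₀,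
      kuratowski (S t (t - τ) '' B (t - τ)) ≤ ENNReal.ofReal (C * φ (ω * τ))) :
    ∀ D : Set X, Bornology.IsBounded D → ∀ t : ℝ,
      ∃ C' ≥ (0 : ℝ), ∃ τ₁ ≥ (0 : ℝ), ∀ τ ≥ τ₁,
        kuratowski (⋃ s ∈ Ici τ, S t (t - s) '' D) ≤
          ENNReal.ofReal (C' * φ ((ω / 2) * τ)) := by
  intro D hD t
  obtain ⟨T, hT, habs⟩ := hB D hD t
  obtain ⟨C, hC, τ₀, hτ₀, hCk⟩ := hκ t
  refine ⟨C, hC, max (2 * T) (2 * τ₀), le_of_lt (lt_max_of_lt_left (by linarith)), ?_⟩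
  intro τ hτ
  have hτT : 2 * T ≤ τ := le_trans (le_max_left _ _) hτ
  have hττ₀ : 2 * τ₀ ≤ τ := le_trans (le_max_right _ _) hτ
  have hτpos : 0 < τ := by linarith
  have hsub : (⋃ s ∈ Ici τ, S t (t - s) '' D) ⊆ S t (t - τ / 2) '' B (t - τ / 2) := by
    intro x hx
    simp only [mem_iUnion, mem_Ici] at hx
    obtain ⟨s, hs, d, hd, rfl⟩ := hx
    have h1 : t - s ≤ t - τ / 2 := by linarith
    have h2 : t - τ / 2 ≤ t := by linarith
    have hsemi := hS.2.1 t (t - τ / 2) (t - s) h1 h2 d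
    refine ⟨S (t - τ / 2) (t - s) d, ?_, hsemi⟩
    have : t - s = (t - τ / 2) - (s - τ / 2) := by ring
    rw [this]
    exact habs (t - τ / 2) h2 (s - τ / 2) (by linarith) ⟨d, hd, rfl⟩
  have hmono : kuratowski (⋃ s ∈ Ici τ, S t (t - s) '' D) ≤
      kuratowski (S t (t - τ / 2) '' B (t - τ / 2)) := by
    apply sInf_le_sInf
    rintro δ ⟨𝒰, h𝒰, hcov, hdiam⟩
    exact ⟨𝒰, h𝒰, hsub.trans hcov, hdiam⟩
  have hbd := hCk (τ / 2) (by linarith)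
  have : ω * (τ / 2) = (ω / 2) * τ := by ring
  rw [this] at hbd
  exact hmono.trans hbd
end
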